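/- Let T be a triangulated category with shift functor Σ and P a connective class of objects closed under isomorphisms and finite direct sums containing 0. Fix d ≥ 1. Then for all X, Y ∈ P ∗ ΣP ∗ ⋯ ∗ Σ^{d+1}P one has Hom_T(X, Σ^n Y) = 0 for every n ≥ d + 2. (This expresses that the corresponding extriangulated category has positive global dimension at most d + 1.) -/

import Mathlib

/-!
Vanishing of morphisms passes through distinguished triangles: if `Hom(X₁, B)` and
`Hom(X₃, B)` vanish then so does `Hom(X₂, B)`, and dually for `Hom(A, -)`. Since
connectivity kills `Hom(ΣⁱP, ΣᵏP)` for `i < k`, induction on the filtration of `X` gives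
`Hom(X, ΣᵏB) = 0` for `X ∈ P ∗ ⋯ ∗ ΣᵐP`, `B ∈ P` and `k ≥ m + 1`. The pieces `ΣʲP` of the
filtration of `Y` only raise the shift, so a second induction extends this to all
`Y ∈ P ∗ ⋯ ∗ Σ^{m'}P` with the same bound `n ≥ m + 1`, which for `m = d + 1` is `n ≥ d + 2`.
-/

open CategoryTheory Limits Pretriangulated

universe v u

namespace AuslanderIyamaStmt4

variable {C : Type u} [Category.{v} C] [HasZeroObject C] [HasShift C ℤ] [Preadditive C]
  [∀ n : ℤ, (shiftFunctor C n).Additive] [Pretriangulated C] [HasBinaryBiproducts C]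

/-- `S₁ ∗ S₂`: objects `Y` fitting in a distinguished triangle `X ⟶ Y ⟶ Z ⟶ X⟦1⟧`
with `X ∈ S₁` and `Z ∈ S₂`. -/
def star (S₁ S₂ : Set C) : Set C :=
  {Y | ∃ (X Z : C) (f : X ⟶ Y) (g : Y ⟶ Z) (h : Z ⟶ X⟦(1 : ℤ)⟧),
    (Triangle.mk f g h ∈ distTriang C) ∧ X ∈ S₁ ∧ Z ∈ S₂}

/-- `Σⁿ S`, closed under isomorphism. -/
def shiftSet (n : ℤ) (S : Set C) : Set C :=
  {X | ∃ Y ∈ S, Nonempty (X ≅ Y⟦n⟧)}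

/-- `V n = P ∗ ΣP ∗ ⋯ ∗ Σⁿ P` (associated to the left; by the octahedral axiom `∗` is
associative so the grouping is irrelevant). -/
def V (P : Set C) : ℕ → Set C
  | 0 => P
  | n + 1 => star (V P n) (shiftSet ((n : ℤ) + 1) P)

def IsConnective (P : Set C) : Prop :=
  ∀ ⦃X Y : C⦄, X ∈ P → Y ∈ P → ∀ n : ℤ, 1 ≤ n → ∀ f : X ⟶ Y⟦n⟧, f = 0

section

omit [HasBinaryBiproducts C]

namespace Triangle

variable {T : Triangle C} (hT : T ∈ distTriang C)
include hT

lemma hom_from_obj₂_eq_zero {B : C} (h₁ : ∀ g : T.obj₁ ⟶ B, g = 0)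
    (h₃ : ∀ g : T.obj₃ ⟶ B, g = 0) (f : T.obj₂ ⟶ B) : f = 0 := by
  obtain ⟨g, rfl⟩ := T.yoneda_exact₂ hT f (h₁ _)
  rw [h₃ g, comp_zero]

lemma hom_to_obj₂_eq_zero {A : C} (h₁ : ∀ g : A ⟶ T.obj₁, g = 0)
    (h₃ : ∀ g : A ⟶ T.obj₃, g = 0) (f : A ⟶ T.obj₂) : f = 0 := by
  obtain ⟨g, rfl⟩ := T.coyoneda_exact₂ hT f (h₃ _)
  rw [h₁ g, zero_comp]

end Triangle

omit [HasZeroObject C] [Pretriangulated C] in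
lemma IsConnective.shift_hom_eq_zero {P : Set C} (hP : IsConnective P) {A B : C}
    (hA : A ∈ P) (hB : B ∈ P) {a b : ℤ} (hab : a < b) (f : A⟦a⟧ ⟶ B⟦b⟧) : f = 0 := by
  obtain ⟨g, hg⟩ := (shiftFunctor C a).map_surjective
    (f ≫ ((shiftFunctorAdd' C (b - a) a b (by omega)).app B).hom)
  rw [hP hA hB (b - a) (by omega) g, Functor.map_zero] at hg
  exact (cancel_mono _).1 (by rw [← hg, zero_comp])

variable {P : Set C} (hP : IsConnective P)
include hP

lemma hom_to_shift_eq_zero_of_mem_V {m : ℕ} {X B : C} (hX : X ∈ V P m) (hB : B ∈ P)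
    {k : ℤ} (hk : m + 1 ≤ k) (f : X ⟶ B⟦k⟧) : f = 0 := by
  induction m generalizing X with
  | zero => exact hP hX hB k (by omega) f
  | succ m ih =>
    obtain ⟨A, Z, u, v, w, hT, hA, Z₀, hZ₀, ⟨e⟩⟩ := hX
    refine Triangle.hom_from_obj₂_eq_zero hT (ih hA (by omega)) (fun g => ?_) f
    have hg : e.inv ≫ g = 0 := hP.shift_hom_eq_zero hZ₀ hB (by omega) _
    exact (cancel_epi e.inv).1 (hg.trans comp_zero.symm)

lemma hom_to_shift_eq_zero_of_mem_V_of_mem_V {m m' : ℕ} {X Y : C} (hX : X ∈ V P m)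
    (hY : Y ∈ V P m') {n : ℤ} (hn : m + 1 ≤ n) (f : X ⟶ Y⟦n⟧) : f = 0 := by
  induction m' generalizing Y with
  | zero => exact hom_to_shift_eq_zero_of_mem_V hP hX hY hn f
  | succ m' ih =>
    obtain ⟨B, W, u, v, w, hT, hB, W₀, hW₀, ⟨e⟩⟩ := hY
    refine Triangle.hom_to_obj₂_eq_zero (Triangle.shift_distinguished _ hT n) (ih hB)
      (fun (g : X ⟶ W⟦n⟧) => ?_) f
    let e' : W⟦n⟧ ≅ W₀⟦(m' + 1 : ℤ) + n⟧ :=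
      (shiftFunctor C n).mapIso e ≪≫ (shiftFunctorAdd' C _ n _ rfl).symm.app W₀
    have hg : g ≫ e'.hom = 0 := hom_to_shift_eq_zero_of_mem_V hP hX hW₀ (by omega) _
    exact (cancel_mono e'.hom).1 (hg.trans zero_comp.symm)

end

theorem statement4_general (d : ℕ) (P : Set C)
    (hPconn : ∀ ⦃X Y : C⦄, X ∈ P → Y ∈ P → ∀ n : ℤ, 1 ≤ n → ∀ f : X ⟶ Y⟦n⟧, f = 0)
    {X Y : C} (hX : X ∈ V P (d + 1)) (hY : Y ∈ V P (d + 1))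
    (n : ℤ) (hn : (d : ℤ) + 2 ≤ n) (f : X ⟶ Y⟦n⟧) :
    f = 0 :=
  hom_to_shift_eq_zero_of_mem_V_of_mem_V hPconn hX hY (by omega) f

theorem statement4 [IsTriangulated C] (d : ℕ) (hd : 1 ≤ d) (P : Set C)
    (hPiso : ∀ ⦃X Y : C⦄, (X ≅ Y) → X ∈ P → Y ∈ P)
    (hPsum : ∀ ⦃X Y : C⦄, X ∈ P → Y ∈ P → (X ⊞ Y) ∈ P)
    (hPzero : ∀ ⦃X : C⦄, IsZero X → X ∈ P)
    (hPconn : ∀ ⦃X Y : C⦄, X ∈ P → Y ∈ P → ∀ n : ℤ, 1 ≤ n → ∀ f : X ⟶ Y⟦n⟧, f = 0)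
    {X Y : C} (hX : X ∈ V P (d + 1)) (hY : Y ∈ V P (d + 1))
    (n : ℤ) (hn : (d : ℤ) + 2 ≤ n) (f : X ⟶ Y⟦n⟧) :
    f = 0 :=
  statement4_general d P hPconn hX hY n hn f

end AuslanderIyamaStmt4
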